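/- Let V(λ) = Σ_{i=0}^n V_i λ^i be a matrix polynomial, S an N×N matrix, f(λ) = Σ_{i=0}^{n+2} f_i λ^i, g(λ) = Σ_{i=0}^{n+1} g_i λ^i, S_t a fixed matrix, and suppose V'(λ)(λI − S) = (λI − S)V(λ) + (f(λ)I − S_t) − g(λ)(λI − S) holds identically in λ, where V'(λ) = Σ_{i=0}^n V'_i λ^i. Then for 1 ≤ j ≤ n, V'_{n−j} = V_{n−j} + Σ_{k=1}^{j} [V_{n−j+k}, S] S^{k−1} + Σ_{k=0}^{j+1} f_{n−j+k+1} S^k − g_{n−j} I, where [A,B] = AB − BA. -/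
import Mathlib


open Finset

lemma coeff_ext {Nn : ℕ} (m : ℕ) (A : ℕ → Matrix (Fin Nn) (Fin Nn) ℂ)
    (h : ∀ lam : ℂ, ∑ i ∈ range m, lam ^ i • A i = 0) :
    ∀ i, i < m → A i = 0 := by
  intro i him
  ext a b
  set p : Polynomial ℂ := ∑ i ∈ range m, Polynomial.C (A i a b) * Polynomial.X ^ i with hp
  have hp0 : p = 0 := by
    apply Polynomial.funext
    intro lam
    have h2 := congrFun (congrFun (h lam) a) b
    simp only [Matrix.sum_apply, Matrix.smul_apply, Matrix.zero_apply, smul_eq_mul] at h2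
    rw [hp, Polynomial.eval_finset_sum]
    simp only [Polynomial.eval_mul, Polynomial.eval_C, Polynomial.eval_pow, Polynomial.eval_X,
      Polynomial.eval_zero]
    rw [← h2]
    exact Finset.sum_congr rfl (fun i _ => mul_comm _ _)
  have h3 : p.coeff i = A i a b := by
    rw [hp, Polynomial.finset_sum_coeff]
    simp only [Polynomial.coeff_C_mul, Polynomial.coeff_X_pow, mul_ite, mul_one, mul_zero]
    rw [Finset.sum_ite_eq (range m)]
    simp [mem_range.mpr him]
  rw [hp0] at h3
  simpa using h3.symm

/-- Comparing coefficients in the Darboux identity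
`V'(λ)(λI − S) = (λI − S)V(λ) + (f(λ)I − Sₜ) − g(λ)(λI − S)` (with `g_{n+1} = f_{n+2}`)
yields, for `1 ≤ j ≤ n`,
`V'_{n−j} = V_{n−j} + ∑_{k=1}^{j} [V_{n−j+k}, S] S^{k−1}
  + ∑_{k=0}^{j+1} f_{n−j+k+1} S^k − g_{n−j} I`. -/
theorem stmt_18 (Nn n : ℕ) (S St : Matrix (Fin Nn) (Fin Nn) ℂ)
    (V V' : ℕ → Matrix (Fin Nn) (Fin Nn) ℂ)
    (f : ℕ → ℂ) (g : ℕ → ℂ) (hg : g (n + 1) = f (n + 2))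
    (hid : ∀ lam : ℂ,
      (∑ i ∈ range (n + 1), lam ^ i • V' i) * (lam • (1 : Matrix (Fin Nn) (Fin Nn) ℂ) - S) =
        (lam • (1 : Matrix (Fin Nn) (Fin Nn) ℂ) - S) * (∑ i ∈ range (n + 1), lam ^ i • V i) +
          ((∑ i ∈ range (n + 3), f i * lam ^ i) • (1 : Matrix (Fin Nn) (Fin Nn) ℂ) - St) -
          (∑ i ∈ range (n + 2), g i * lam ^ i) •
            (lam • (1 : Matrix (Fin Nn) (Fin Nn) ℂ) - S)) :
    ∀ j : ℕ, 1 ≤ j → j ≤ n →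
      V' (n - j) = V (n - j) +
        (∑ k ∈ Icc 1 j, (V (n - j + k) * S - S * V (n - j + k)) * S ^ (k - 1)) +
        (∑ k ∈ range (j + 2), f (n - j + k + 1) • S ^ k) -
        g (n - j) • (1 : Matrix (Fin Nn) (Fin Nn) ℂ) := by
  set A : ℕ → Matrix (Fin Nn) (Fin Nn) ℂ := fun m =>
    ((if 1 ≤ m then (if m - 1 ≤ n then V' (m-1) else 0) else 0)
      - (if m ≤ n then V' m else 0) * S)
    - ((if 1 ≤ m then (if m - 1 ≤ n then V (m-1) else 0) else 0)
        - S * (if m ≤ n then V m else 0)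
        + f m • (1 : Matrix (Fin Nn) (Fin Nn) ℂ)
        - (if m = 0 then St else 0)
        - (if 1 ≤ m then (if m - 1 ≤ n+1 then g (m-1) else 0) else 0) •
            (1 : Matrix (Fin Nn) (Fin Nn) ℂ)
        + (if m ≤ n+1 then g m else 0) • S) with hAdef
  have hA : ∀ lam : ℂ, ∑ m ∈ range (n+3), lam ^ m • A m = 0 := by
    intro lam
    have h := hid lam
    have l1 : (∑ i ∈ range (n+1), lam ^ i • V' i) * (lam • (1 : Matrix (Fin Nn) (Fin Nn) ℂ) - S)
        = (∑ i ∈ range (n+1), lam ^ (i+1) • V' i) - ∑ i ∈ range (n+1), lam ^ i • (V' i * S) := by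
      rw [mul_sub, Finset.sum_mul, Finset.sum_mul]
      congr 1
      · refine Finset.sum_congr rfl fun i _ => ?_
        rw [smul_mul_assoc, Matrix.mul_smul, mul_one, smul_smul, ← pow_succ]
      · exact Finset.sum_congr rfl fun i _ => smul_mul_assoc _ _ _
    have l2 : (lam • (1 : Matrix (Fin Nn) (Fin Nn) ℂ) - S) * (∑ i ∈ range (n+1), lam ^ i • V i)
        = (∑ i ∈ range (n+1), lam ^ (i+1) • V i) - ∑ i ∈ range (n+1), lam ^ i • (S * V i) := by
      rw [sub_mul, Finset.mul_sum, Finset.mul_sum]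
      congr 1
      · refine Finset.sum_congr rfl fun i _ => ?_
        rw [smul_mul_assoc, one_mul, smul_smul, ← pow_succ']
      · exact Finset.sum_congr rfl fun i _ => Matrix.mul_smul _ _ _
    have l3 : (∑ i ∈ range (n+2), g i * lam ^ i) • (lam • (1 : Matrix (Fin Nn) (Fin Nn) ℂ) - S)
        = (∑ i ∈ range (n+2), (g i * lam ^ (i+1)) • (1 : Matrix (Fin Nn) (Fin Nn) ℂ))
          - ∑ i ∈ range (n+2), (g i * lam ^ i) • S := by
      rw [smul_sub, Finset.sum_smul, Finset.sum_smul]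
      congr 1
      refine Finset.sum_congr rfl fun i _ => ?_
      rw [smul_smul, pow_succ, ← mul_assoc]
    have P1 : ∑ m ∈ range (n+3),
          lam ^ m • (if 1 ≤ m then (if m - 1 ≤ n then V' (m-1) else 0) else 0)
        = ∑ i ∈ range (n+1), lam ^ (i+1) • V' i := by
      rw [Finset.sum_range_succ']
      have h1 : ∀ i : ℕ, (if 1 ≤ i+1 then (if i+1-1 ≤ n then V' (i+1-1) else 0) else 0)
          = (if i ≤ n then V' i else 0) := fun i => by simp
      simp only [h1]
      rw [if_neg (by omega), smul_zero, add_zero, Finset.sum_range_succ, if_neg (by omega),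
        smul_zero, add_zero]
      exact Finset.sum_congr rfl fun i hi => by
        rw [if_pos (by simpa using Nat.lt_succ_iff.mp (mem_range.mp hi))]
    have P2 : ∑ m ∈ range (n+3), lam ^ m • ((if m ≤ n then V' m else 0) * S)
        = ∑ i ∈ range (n+1), lam ^ i • (V' i * S) := by
      rw [Finset.sum_range_succ, Finset.sum_range_succ, if_neg (by omega), if_neg (by omega)]
      simp only [Matrix.zero_mul, smul_zero, add_zero]
      exact Finset.sum_congr rfl fun i hi => by
        rw [if_pos (by simpa using Nat.lt_succ_iff.mp (mem_range.mp hi))]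
    have P3 : ∑ m ∈ range (n+3),
          lam ^ m • (if 1 ≤ m then (if m - 1 ≤ n then V (m-1) else 0) else 0)
        = ∑ i ∈ range (n+1), lam ^ (i+1) • V i := by
      rw [Finset.sum_range_succ']
      have h1 : ∀ i : ℕ, (if 1 ≤ i+1 then (if i+1-1 ≤ n then V (i+1-1) else 0) else 0)
          = (if i ≤ n then V i else 0) := fun i => by simp
      simp only [h1]
      rw [if_neg (by omega), smul_zero, add_zero, Finset.sum_range_succ, if_neg (by omega),
        smul_zero, add_zero]
      exact Finset.sum_congr rfl fun i hi => by
        rw [if_pos (by simpa using Nat.lt_succ_iff.mp (mem_range.mp hi))]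
    have P4 : ∑ m ∈ range (n+3), lam ^ m • (S * (if m ≤ n then V m else 0))
        = ∑ i ∈ range (n+1), lam ^ i • (S * V i) := by
      rw [Finset.sum_range_succ, Finset.sum_range_succ, if_neg (by omega), if_neg (by omega)]
      simp only [Matrix.mul_zero, smul_zero, add_zero]
      exact Finset.sum_congr rfl fun i hi => by
        rw [if_pos (by simpa using Nat.lt_succ_iff.mp (mem_range.mp hi))]
    have P5 : ∑ m ∈ range (n+3), lam ^ m • (f m • (1 : Matrix (Fin Nn) (Fin Nn) ℂ))
        = (∑ i ∈ range (n+3), f i * lam ^ i) • (1 : Matrix (Fin Nn) (Fin Nn) ℂ) := by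
      rw [Finset.sum_smul]
      exact Finset.sum_congr rfl fun i _ => by rw [smul_smul, mul_comm]
    have P6 : ∑ m ∈ range (n+3), lam ^ m • (if m = 0 then St else 0) = St := by
      rw [Finset.sum_eq_single 0]
      · simp
      · intro b _ hb; rw [if_neg hb, smul_zero]
      · simp
    have P7 : ∑ m ∈ range (n+3),
          lam ^ m • ((if 1 ≤ m then (if m - 1 ≤ n + 1 then g (m-1) else 0) else 0) •
            (1 : Matrix (Fin Nn) (Fin Nn) ℂ))
        = ∑ i ∈ range (n+2), (g i * lam ^ (i+1)) • (1 : Matrix (Fin Nn) (Fin Nn) ℂ) := by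
      rw [Finset.sum_range_succ']
      have h1 : ∀ i : ℕ, (if 1 ≤ i+1 then (if i+1-1 ≤ n+1 then g (i+1-1) else 0) else 0)
          = (if i ≤ n+1 then g i else 0) := fun i => by simp
      simp only [h1]
      rw [if_neg (by omega), zero_smul, smul_zero, add_zero]
      refine Finset.sum_congr rfl fun i hi => ?_
      rw [if_pos (by simpa using Nat.lt_succ_iff.mp (mem_range.mp hi)), smul_smul, mul_comm]
    have P8 : ∑ m ∈ range (n+3), lam ^ m • ((if m ≤ n + 1 then g m else 0) • S)
        = ∑ i ∈ range (n+2), (g i * lam ^ i) • S := by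
      rw [Finset.sum_range_succ, if_neg (by omega)]
      simp only [zero_smul, smul_zero, add_zero]
      refine Finset.sum_congr rfl fun i hi => ?_
      rw [if_pos (by simpa using Nat.lt_succ_iff.mp (mem_range.mp hi)), smul_smul, mul_comm]
    rw [l1, l2, l3] at h
    calc ∑ m ∈ range (n+3), lam ^ m • A m
        = ((∑ m ∈ range (n+3),
              lam ^ m • (if 1 ≤ m then (if m - 1 ≤ n then V' (m-1) else 0) else 0))
            - ∑ m ∈ range (n+3), lam ^ m • ((if m ≤ n then V' m else 0) * S))
          - ((∑ m ∈ range (n+3),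
                lam ^ m • (if 1 ≤ m then (if m - 1 ≤ n then V (m-1) else 0) else 0))
              - (∑ m ∈ range (n+3), lam ^ m • (S * (if m ≤ n then V m else 0)))
              + (∑ m ∈ range (n+3), lam ^ m • (f m • (1 : Matrix (Fin Nn) (Fin Nn) ℂ)))
              - (∑ m ∈ range (n+3), lam ^ m • (if m = 0 then St else 0))
              - (∑ m ∈ range (n+3),
                  lam ^ m • ((if 1 ≤ m then (if m - 1 ≤ n + 1 then g (m-1) else 0) else 0) •
                    (1 : Matrix (Fin Nn) (Fin Nn) ℂ)))
              + ∑ m ∈ range (n+3), lam ^ m • ((if m ≤ n + 1 then g m else 0) • S)) := by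
          simp only [hAdef, smul_sub, smul_add, Finset.sum_sub_distrib, Finset.sum_add_distrib]
      _ = 0 := by
          rw [P1, P2, P3, P4, P5, P6, P7, P8, sub_eq_zero, h]
          abel
  have hco := coeff_ext (n+3) A hA
  have eqA : ∀ m, 1 ≤ m → m ≤ n →
      V' (m-1) - V' m * S
        = V (m-1) - S * V m + f m • (1 : Matrix (Fin Nn) (Fin Nn) ℂ)
          - g (m-1) • (1 : Matrix (Fin Nn) (Fin Nn) ℂ) + g m • S := by
    intro m h1 h2
    have h := hco m (by omega)
    rw [hAdef] at h
    simp only [h1, h2, show m - 1 ≤ n from by omega, show ¬(m = 0) from by omega,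
      show m - 1 ≤ n + 1 from by omega, show m ≤ n + 1 from by omega,
      if_true, if_false, ite_true, ite_false, sub_zero] at h
    rwa [sub_eq_zero] at h
  have eqB : V' n = V n + f (n+1) • (1 : Matrix (Fin Nn) (Fin Nn) ℂ)
      - g n • (1 : Matrix (Fin Nn) (Fin Nn) ℂ) + f (n+2) • S := by
    have h := hco (n+1) (by omega)
    rw [hAdef] at h
    simp only [show 1 ≤ n + 1 from by omega, show n + 1 - 1 = n from by omega,
      show ¬(n + 1 ≤ n) from by omega, show ¬(n + 1 = 0) from by omega,
      show n ≤ n from le_refl n, show n ≤ n + 1 from by omega,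
      show n + 1 ≤ n + 1 from le_refl _,
      if_true, if_false, ite_true, ite_false, Matrix.zero_mul, Matrix.mul_zero,
      sub_zero, zero_mul] at h
    rw [sub_eq_zero] at h
    rw [h, hg]
  have key : ∀ j, j ≤ n → V' (n - j) = V (n - j)
      + (∑ i ∈ range j, (V (n - j + (i+1)) * S - S * V (n - j + (i+1))) * S ^ i)
      + (∑ k ∈ range (j + 2), f (n - j + k + 1) • S ^ k)
      - g (n - j) • (1 : Matrix (Fin Nn) (Fin Nn) ℂ) := by
    intro j
    induction j with
    | zero =>
        intro _
        simp only [Nat.sub_zero, Finset.range_zero, Finset.sum_empty, add_zero,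
          Finset.sum_range_succ, Finset.sum_range_zero, zero_add, pow_zero, pow_one,
          Nat.add_zero]
        rw [eqB]
        abel
    | succ j ih =>
        intro hjn
        obtain ⟨d, rfl⟩ : ∃ d, n = d + (j+1) := ⟨n - (j+1), by omega⟩
        have e1 : d + (j+1) - (j+1) = d := by omega
        have e2 : d + (j+1) - j = d + 1 := by omega
        have ihh := ih (by omega)
        rw [e2] at ihh
        rw [e1]
        have hAm := eqA (d+1) (by omega) (by omega)
        rw [show d + 1 - 1 = d from by omega] at hAm
        have expand : V' (d+1) * S = V (d+1) * S
            + (∑ i ∈ range j, (V (d + 1 + (i+1)) * S - S * V (d + 1 + (i+1))) * S ^ (i+1))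
            + (∑ k ∈ range (j + 2), f (d + 1 + k + 1) • S ^ (k+1))
            - g (d+1) • S := by
          rw [ihh, sub_mul, add_mul, add_mul, Finset.sum_mul, Finset.sum_mul, smul_mul_assoc,
            one_mul]
          congr 1
          congr 1
          congr 1
          · exact Finset.sum_congr rfl fun i _ => by rw [mul_assoc, ← pow_succ]
          · exact Finset.sum_congr rfl fun k _ => by rw [smul_mul_assoc, ← pow_succ]
        rw [sub_eq_iff_eq_add] at hAm
        rw [hAm, expand]
        rw [Finset.sum_range_succ' (fun i => (V (d + (i+1)) * S - S * V (d + (i+1))) * S ^ i) j]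
        rw [Finset.sum_range_succ' (fun k => f (d + k + 1) • S ^ k) (j+2)]
        have cong1 : ∑ i ∈ range j, (V (d + 1 + (i+1)) * S - S * V (d + 1 + (i+1))) * S ^ (i+1)
            = ∑ i ∈ range j, (V (d + (i+1+1)) * S - S * V (d + (i+1+1))) * S ^ (i+1) :=
          Finset.sum_congr rfl fun i _ => by rw [show d + 1 + (i+1) = d + (i+1+1) from by omega]
        have cong2 : ∑ k ∈ range (j+2), f (d + 1 + k + 1) • S ^ (k+1)
            = ∑ k ∈ range (j+2), f (d + (k+1) + 1) • S ^ (k+1) :=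
          Finset.sum_congr rfl fun k _ => by rw [show d + 1 + k + 1 = d + (k+1) + 1 from by omega]
        rw [cong1, cong2]
        simp only [pow_zero, mul_one, Nat.add_zero]
        abel
  intro j hj1 hj2
  have hI : ∑ k ∈ Icc 1 j, (V (n - j + k) * S - S * V (n - j + k)) * S ^ (k - 1)
      = ∑ i ∈ range j, (V (n - j + (i+1)) * S - S * V (n - j + (i+1))) * S ^ i := by
    rw [← Finset.Ico_add_one_right_eq_Icc, Finset.sum_Ico_eq_sum_range]
    refine Finset.sum_congr (by norm_num) fun i _ => by
      rw [show 1 + i = i + 1 from by omega, Nat.add_sub_cancel]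
  rw [hI]
  exact key j hj2
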